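/- arXiv:math/0703418 — 8 statements merged into one kernel-verified Lean document; each statement's English description precedes it below -/
import Mathlib

section
/- Let p be an odd prime, d ≥ 2 even with d ≤ p+1. Then the maximum of h_p over all nonzero points of F_p^d equals dp/2, i.e., there exists a nonzero a ∈ F_p^d with h_p(a) = dp/2, and every nonzero a satisfies h_p(a) ≤ dp/2. -/
/-- The height of a tuple `a ∈ (ZMod p)^d`:
`min_{k=1}^{p-1} Σ_i (k·a_i mod p)`, using least nonnegative representatives. -/
noncomputable def heightP (p : ℕ) {d : ℕ} (a : Fin d → ZMod p) : ℕ :=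
  sInf {n | ∃ k : ℕ, 1 ≤ k ∧ k ≤ p - 1 ∧ n = ∑ i, ((k : ZMod p) * a i).val}

lemma sum_alt (x y : ℕ) : ∀ m : ℕ,
    ∑ i ∈ Finset.range (2 * m), (if i % 2 = 0 then x else y) = m * (x + y) := by
  intro m
  induction m with
  | zero => simp
  | succ n ih =>
    have h : 2 * (n + 1) = (2 * n) + 1 + 1 := by ring
    rw [h, Finset.sum_range_succ, Finset.sum_range_succ, ih]
    rw [if_pos (by omega : (2 * n) % 2 = 0), if_neg (by omega : ¬ (2 * n + 1) % 2 = 0)]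
    ring

theorem stmt_2 (p d : ℕ) (hp : p.Prime) (hodd : Odd p) (hd2 : 2 ≤ d)
    (hdeven : Even d) (hdp : d ≤ p + 1) :
    (∃ a : Fin d → ZMod p, a ≠ 0 ∧ heightP p a = d * p / 2) ∧
      (∀ a : Fin d → ZMod p, a ≠ 0 → heightP p a ≤ d * p / 2) := by
  have hp2 : 2 ≤ p := hp.two_le
  have hp3 : 3 ≤ p := by
    obtain ⟨t, ht⟩ := hodd; omega
  haveI : NeZero p := ⟨by omega⟩
  obtain ⟨m, hm⟩ := hdeven
  have hd : d = 2 * m := by omega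
  have hdpeq : d * p / 2 = m * p := by
    have h : d * p = 2 * (m * p) := by rw [hd]; ring
    rw [h, Nat.mul_div_cancel_left _ two_pos]
  constructor
  · refine ⟨fun i => if i.val % 2 = 0 then 1 else -1, ?_, ?_⟩
    · intro h
      haveI : Fact (1 < p) := ⟨by omega⟩
      have h0 := congrFun h ⟨0, by omega⟩
      simp at h0
    · have key : ∀ k : ℕ, 1 ≤ k → k ≤ p - 1 →
          ∑ i : Fin d, ((k : ZMod p) * (if i.val % 2 = 0 then (1 : ZMod p) else -1)).val
            = m * p := by
        intro k hk1 hk2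
        have hkne : (k : ZMod p) ≠ 0 := by
          rw [Ne, ZMod.natCast_eq_zero_iff]
          intro hdvd
          have := Nat.le_of_dvd (by omega) hdvd
          omega
        have hvpos : 1 ≤ (k : ZMod p).val := by
          rcases Nat.eq_zero_or_pos (k : ZMod p).val with h0 | h0
          · exact absurd ((ZMod.val_eq_zero _).mp h0) hkne
          · exact h0
        have hvlt : (k : ZMod p).val < p := ZMod.val_lt _
        have hneg : (-(k : ZMod p)).val = p - (k : ZMod p).val := by
          rw [ZMod.neg_val, if_neg hkne]
        have hxy : (k : ZMod p).val + (-(k : ZMod p)).val = p := by omega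
        have step : ∀ i : Fin d,
            ((k : ZMod p) * (if i.val % 2 = 0 then (1 : ZMod p) else -1)).val
              = (if i.val % 2 = 0 then (k : ZMod p).val else (-(k : ZMod p)).val) := by
          intro i; split_ifs <;> simp
        rw [Finset.sum_congr rfl (fun i _ => step i)]
        rw [Fin.sum_univ_eq_sum_range
          (fun n => if n % 2 = 0 then (k : ZMod p).val else (-(k : ZMod p)).val) d]
        rw [hd, sum_alt, hxy]
      rw [hdpeq]
      unfold heightP
      apply le_antisymm
      · exact Nat.sInf_le ⟨1, le_refl 1, by omega, (key 1 (le_refl 1) (by omega)).symm⟩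
      · refine le_csInf ⟨m * p, 1, le_refl 1, by omega, (key 1 (le_refl 1) (by omega)).symm⟩ ?_
        rintro n ⟨k, hk1, hk2, rfl⟩
        rw [key k hk1 hk2]
  · intro a _
    have hneg1 : (((p - 1 : ℕ)) : ZMod p) = -1 := by
      rw [Nat.cast_sub (by omega : 1 ≤ p), ZMod.natCast_self]
      simp
    have h1 : heightP p a ≤ ∑ i, (((1 : ℕ) : ZMod p) * a i).val :=
      Nat.sInf_le ⟨1, le_refl 1, by omega, rfl⟩
    have h2 : heightP p a ≤ ∑ i, (((p - 1 : ℕ) : ZMod p) * a i).val :=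
      Nat.sInf_le ⟨p - 1, by omega, le_refl _, rfl⟩
    have hsum : (∑ i, (((1 : ℕ) : ZMod p) * a i).val)
        + (∑ i, (((p - 1 : ℕ) : ZMod p) * a i).val) ≤ d * p := by
      rw [← Finset.sum_add_distrib]
      calc (∑ i, ((((1 : ℕ) : ZMod p) * a i).val + (((p - 1 : ℕ) : ZMod p) * a i).val))
          ≤ ∑ _i : Fin d, p := by
            apply Finset.sum_le_sum
            intro i _
            rw [hneg1, Nat.cast_one, one_mul, neg_one_mul, ZMod.neg_val]
            split_ifs with h
            · simp [h]
            · have := ZMod.val_lt (a i); omega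
        _ = d * p := by simp [Finset.sum_const, mul_comm]
    have : heightP p a * 2 ≤ d * p := by omega
    exact (Nat.le_div_iff_mul_le two_pos).mpr this
end

section
/- Let p be an odd prime and a ∈ F_p* with (a mod p) < √p. Then h_p(1,a) = 1 + (a mod p). -/
/-
Taking `k = 1` gives the value `1 + (a mod p)`. Conversely, write `m = a mod p`, so `m * m < p`.
For `k ≥ 1`, either `k * m < p` and then `k + k * m ≥ 1 + m`, or `k * m ≥ p > m * m`, which
forces `k > m` and already `k ≥ 1 + m`.
-/

/-- The height `h_p(⟨1,a⟩) = min_{k=1}^{p-1} (k + (k·a mod p))`. -/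
noncomputable def heightLine (p : ℕ) (a : ZMod p) : ℕ :=
  sInf {n | ∃ k : ℕ, 1 ≤ k ∧ k ≤ p - 1 ∧ n = k + ((k : ZMod p) * a).val}

theorem ZMod.val_natCast_mul {n : ℕ} (k : ℕ) (a : ZMod n) :
    ((k : ZMod n) * a).val = k * a.val % n := by
  rw [ZMod.val_mul, ZMod.val_natCast, Nat.mod_mul_mod]

theorem Nat.one_add_le_add_mul_mod {m k p : ℕ} (hmp : m * m < p) (hk : 1 ≤ k) :
    1 + m ≤ k + k * m % p := by
  rcases lt_or_ge (k * m) p with hlt | hge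
  · rw [Nat.mod_eq_of_lt hlt]
    nlinarith
  · have : m < k := Nat.lt_of_mul_lt_mul_right (hmp.trans_le hge)
    omega

theorem heightLine_le {p k : ℕ} (a : ZMod p) (hk1 : 1 ≤ k) (hkp : k ≤ p - 1) :
    heightLine p a ≤ k + ((k : ZMod p) * a).val :=
  Nat.sInf_le ⟨k, hk1, hkp, rfl⟩

theorem le_heightLine {p n : ℕ} (a : ZMod p) (hp : 2 ≤ p)
    (h : ∀ k, 1 ≤ k → k ≤ p - 1 → n ≤ k + ((k : ZMod p) * a).val) : n ≤ heightLine p a :=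
  le_csInf ⟨_, 1, le_rfl, by omega, rfl⟩ fun _ ⟨k, hk1, hkp, hn⟩ => hn ▸ h k hk1 hkp

theorem stmt_5_general (p : ℕ) (hp : p.Prime) (a : ZMod p)
    (hsmall : (a.val : ℝ) < Real.sqrt p) :
    heightLine p a = 1 + a.val := by
  have hp2 := hp.two_le
  have hmp : a.val * a.val < p := by
    have := (Real.lt_sqrt (Nat.cast_nonneg _)).mp hsmall
    exact_mod_cast (sq (a.val : ℝ)) ▸ this
  apply le_antisymm
  · simpa using heightLine_le a le_rfl (by omega : 1 ≤ p - 1)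
  · refine le_heightLine a hp2 fun k hk1 _ => ?_
    rw [ZMod.val_natCast_mul]
    exact Nat.one_add_le_add_mul_mod hmp hk1

theorem stmt_5 (p : ℕ) (hp : p.Prime) (hodd : Odd p) (a : ZMod p) (ha : a ≠ 0)
    (hsmall : (a.val : ℝ) < Real.sqrt p) :
    heightLine p a = 1 + a.val :=
  stmt_5_general p hp a hsmall
end

section
/- Let p be an odd prime and a ∈ F_p*. Then h_p(1,a) = p if and only if a ≡ p-1 (mod p), i.e., a = -1 in F_p. -/
theorem stmt_8 (p : ℕ) (hp : p.Prime) (hodd : Odd p) (a : ZMod p) (ha : a ≠ 0) :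
    heightLine p a = p ↔ a = -1 := by
  haveI : NeZero p := ⟨hp.pos.ne'⟩
  have hp2 : 2 ≤ p := hp.two_le
  have hcast : ((p - 1 : ℕ) : ZMod p) = -1 := by
    rw [Nat.cast_sub hp.one_le, ZMod.natCast_self]
    ring
  constructor
  · intro h
    have h1 : (1 : ℕ) + ((1 : ZMod p) * a).val ∈
        {n | ∃ k : ℕ, 1 ≤ k ∧ k ≤ p - 1 ∧ n = k + ((k : ZMod p) * a).val} :=
      ⟨1, le_refl _, by omega, by norm_num⟩
    have hle := Nat.sInf_le h1
    rw [show sInf {n | ∃ k : ℕ, 1 ≤ k ∧ k ≤ p - 1 ∧ n = k + ((k : ZMod p) * a).val}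
        = heightLine p a from rfl, h, one_mul] at hle
    have hlt : a.val < p := ZMod.val_lt a
    have hval : a.val = p - 1 := by omega
    have : ((a.val : ℕ) : ZMod p) = a := by
      simp [ZMod.natCast_val, ZMod.cast_id]
    rw [← this, hval, hcast]
  · intro h
    subst h
    have key : ∀ k : ℕ, 1 ≤ k → k ≤ p - 1 → k + ((k : ZMod p) * (-1)).val = p := by
      intro k hk1 hk2
      have hklt : k < p := by omega
      have hkval : (k : ZMod p).val = k := ZMod.val_cast_of_lt hklt
      have hkne : (k : ZMod p) ≠ 0 := by
        intro h0
        have := ZMod.val_cast_of_lt hklt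
        rw [h0] at this
        simp at this
        omega
      rw [mul_neg_one, ZMod.neg_val, if_neg hkne, hkval]
      omega
    have hmem : p ∈ {n | ∃ k : ℕ, 1 ≤ k ∧ k ≤ p - 1 ∧ n = k + ((k : ZMod p) * (-1 : ZMod p)).val} :=
      ⟨1, le_refl _, by omega, (key 1 le_rfl (by omega)).symm⟩
    apply le_antisymm
    · exact Nat.sInf_le hmem
    · apply le_csInf ⟨p, hmem⟩
      rintro n ⟨k, hk1, hk2, rfl⟩
      rw [key k hk1 hk2]
end

section
/- Let p be an odd prime, 1 ≤ b ≤ p-1 an integer, and a = p - b in F_p (i.e., a ≡ -b mod p). Then h_p(1,a) ≤ (p + (b-1)^2)/b. -/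
theorem stmt_9 (p : ℕ) (hp : p.Prime) (hodd : Odd p) (b : ℕ)
    (hb1 : 1 ≤ b) (hb2 : b ≤ p - 1) (a : ZMod p) (hab : a = -(b : ZMod p)) :
    heightLine p a * b ≤ p + (b - 1) ^ 2 := by
  have hp2 : 2 ≤ p := hp.two_le
  set k := (p - 1) / b with hk
  set r := (p - 1) % b with hr
  have hb0 : 0 < b := hb1
  have hrb : r < b := Nat.mod_lt _ hb0
  have hdm : b * k + r = p - 1 := Nat.div_add_mod (p - 1) b
  have hkb : k * b + (r + 1) = p := by rw [mul_comm]; omega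
  have hk1 : 1 ≤ k := (Nat.one_le_div_iff hb0).mpr (by omega)
  have hkle : k ≤ p - 1 := Nat.div_le_self _ _
  have hsltp : r + 1 < p := by omega
  have hval : ((k : ZMod p) * a).val = r + 1 := by
    have h1 : (k : ZMod p) * a = ((r + 1 : ℕ) : ZMod p) := by
      rw [hab]
      have hz : ((k * b : ℕ) : ZMod p) + ((r + 1 : ℕ) : ZMod p) = 0 := by
        rw [← Nat.cast_add, hkb, ZMod.natCast_self]
      push_cast at hz ⊢
      linear_combination -hz
    rw [h1, ZMod.val_natCast_of_lt hsltp]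
  have hle : heightLine p a ≤ k + (r + 1) :=
    Nat.sInf_le ⟨k, hk1, hkle, by rw [hval]⟩
  have hs : (r + 1) * (b - 1) ≤ (b - 1) ^ 2 := by
    rcases Nat.eq_or_lt_of_le hb1 with h1 | h2
    · simp [← h1]
    · -- b ≥ 2; show r + 1 ≤ b - 1, i.e. r ≠ b - 1
      have hrne : r + 1 ≠ b := by
        intro h
        have hdvd : b ∣ p := ⟨k + 1, by nlinarith [hkb]⟩
        rcases (Nat.Prime.eq_one_or_self_of_dvd hp b hdvd) with h' | h' <;> omega
      have : r + 1 ≤ b - 1 := by omega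
      calc (r + 1) * (b - 1) ≤ (b - 1) * (b - 1) := Nat.mul_le_mul_right _ this
        _ = (b - 1) ^ 2 := (sq (b - 1)).symm
  obtain ⟨c, rfl⟩ : ∃ c, b = c + 1 := ⟨b - 1, by omega⟩
  simp only [Nat.add_sub_cancel] at hs ⊢
  calc heightLine p a * (c + 1) ≤ (k + (r + 1)) * (c + 1) :=
        Nat.mul_le_mul_right _ hle
    _ = k * (c + 1) + (r + 1) + (r + 1) * c := by ring
    _ = p + (r + 1) * c := by omega
    _ ≤ p + c ^ 2 := by omega
end

section
/- Let p be an odd prime. If a ∈ F_p satisfies a ≡ (p-1)/2 (mod p) or a ≡ p-2 (mod p), then h_p(1,a) = (p+1)/2. -/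
theorem stmt_10 (p : ℕ) (hp : p.Prime) (hodd : Odd p) (a : ZMod p)
    (ha : a = (((p - 1) / 2 : ℕ) : ZMod p) ∨ a = ((p - 2 : ℕ) : ZMod p)) :
    heightLine p a = (p + 1) / 2 := by
  have hp2 : p % 2 = 1 := Nat.odd_iff.mp hodd
  have hp3 : 3 ≤ p := by
    have := hp.two_le; omega
  haveI : NeZero p := ⟨by omega⟩
  haveI : Fact (1 < p) := ⟨by omega⟩
  have hpm1 : ((p - 1 : ℕ) : ZMod p) = -1 := by
    have h1 : (1 : ℕ) ≤ p := by omega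
    push_cast [Nat.cast_sub h1]
    simp
  have hpm2 : ((p - 2 : ℕ) : ZMod p) = -2 := by
    have h1 : (2 : ℕ) ≤ p := by omega
    push_cast [Nat.cast_sub h1]
    simp
  have h2t : (2 : ZMod p) * (((p - 1) / 2 : ℕ) : ZMod p) = -1 := by
    rw [← hpm1]
    rw [← Nat.cast_ofNat, ← Nat.cast_mul]
    congr 1
    omega
  apply le_antisymm
  · -- membership witness
    rcases ha with ha | ha
    · apply Nat.sInf_le
      refine ⟨1, le_refl 1, by omega, ?_⟩
      rw [ha]
      simp only [Nat.cast_one, one_mul]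
      rw [ZMod.val_natCast]
      have : (p - 1) / 2 % p = (p - 1) / 2 := Nat.mod_eq_of_lt (by omega)
      omega
    · apply Nat.sInf_le
      refine ⟨(p - 1) / 2, by omega, by omega, ?_⟩
      rw [ha]
      have hx : ((((p - 1) / 2 : ℕ) : ZMod p)) * ((p - 2 : ℕ) : ZMod p) = 1 := by
        rw [hpm2]
        have : ((((p - 1) / 2 : ℕ) : ZMod p)) * (-2)
            = -((2 : ZMod p) * (((p - 1) / 2 : ℕ) : ZMod p)) := by ring
        rw [this, h2t]; ring
      rw [hx, ZMod.val_one]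
      omega
  · -- lower bound
    have hne : {n | ∃ k : ℕ, 1 ≤ k ∧ k ≤ p - 1 ∧ n = k + ((k : ZMod p) * a).val}.Nonempty := by
      exact ⟨1 + ((1 : ZMod p) * a).val, 1, le_refl 1, by omega, by push_cast; ring_nf⟩
    apply le_csInf hne
    rintro n ⟨k, hk1, hk2, rfl⟩
    set v := ((k : ZMod p) * a).val with hv
    have hvlt : v < p := ZMod.val_lt _
    have hvcast : ((v : ℕ) : ZMod p) = (k : ZMod p) * a := by
      rw [hv, ZMod.natCast_val, ZMod.cast_id]
    rcases ha with ha | ha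
    · -- a = (p-1)/2 : 2v + k ≡ 0 mod p
      have hdvd : p ∣ 2 * v + k := by
        rw [← ZMod.natCast_eq_zero_iff]
        push_cast
        rw [hvcast, ha]
        have : (2 : ZMod p) * ((k : ZMod p) * (((p - 1) / 2 : ℕ) : ZMod p))
            = (k : ZMod p) * ((2 : ZMod p) * (((p - 1) / 2 : ℕ) : ZMod p)) := by ring
        rw [this, h2t]; ring
      obtain ⟨m, hm⟩ := hdvd
      have hm3 : m < 3 := by
        have h1 : p * m < p * 3 := by omega
        exact Nat.lt_of_mul_lt_mul_left h1
      interval_cases m <;> omega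
    · -- a = p-2 : v + 2k ≡ 0 mod p
      have hdvd : p ∣ v + 2 * k := by
        rw [← ZMod.natCast_eq_zero_iff]
        push_cast
        rw [hvcast, ha, hpm2]
        ring
      obtain ⟨m, hm⟩ := hdvd
      have hm3 : m < 3 := by
        have h1 : p * m < p * 3 := by omega
        exact Nat.lt_of_mul_lt_mul_left h1
      interval_cases m <;> omega
end

section
/- Let p be an odd prime and a ∈ F_p with a ∉ {(p-1)/2 mod p, p-2 mod p, p-1 mod p}. Then h_p(1,a) ≤ (p-1)/2. -/
theorem key_aux (p d : ℕ) (hp : p.Prime) (hodd : Odd p) (hd3 : 3 ≤ d)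
    (hdm : 2 * d ≤ p - 1) : p / d + p % d ≤ (p - 1) / 2 := by
  obtain ⟨t, ht⟩ := hodd
  have hdp : d < p := by omega
  have hqr : d * (p / d) + p % d = p := Nat.div_add_mod p d
  have hrd : p % d < d := Nat.mod_lt _ (by omega)
  have hr0 : p % d ≠ 0 := by
    intro h
    rcases hp.eq_one_or_self_of_dvd d (Nat.dvd_of_mod_eq_zero h) with h' | h' <;> omega
  have hq2 : 2 ≤ p / d := (Nat.le_div_iff_mul_le (by omega)).mpr (by omega)
  set q := p / d with hq
  set r := p % d with hr
  have hmul : 2 * q + r + 1 ≤ d * q := by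
    rcases eq_or_lt_of_le hd3 with h3 | h4
    · rw [← h3] at hqr ⊢
      omega
    · have h1 : 2 * (d - 2) ≤ q * (d - 2) := Nat.mul_le_mul_right _ hq2
      have h2 : q * d = q * 2 + q * (d - 2) := by
        rw [← Nat.mul_add]; congr 1; omega
      have h3 : d * q = q * d := Nat.mul_comm d q
      omega
  omega

theorem stmt_11 (p : ℕ) (hp : p.Prime) (hodd : Odd p) (a : ZMod p)
    (h1 : a ≠ (((p - 1) / 2 : ℕ) : ZMod p))
    (h2 : a ≠ ((p - 2 : ℕ) : ZMod p))
    (h3 : a ≠ ((p - 1 : ℕ) : ZMod p)) :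
    heightLine p a ≤ (p - 1) / 2 := by
  haveI : NeZero p := ⟨hp.pos.ne'⟩
  obtain ⟨t, ht⟩ := hodd
  have hp2 := hp.two_le
  have hp3 : 3 ≤ p := by omega
  set v := a.val with hv
  have hvp : v < p := ZMod.val_lt a
  have hva : ((v : ℕ) : ZMod p) = a := ZMod.natCast_rightInverse a
  have h1' : v ≠ (p - 1) / 2 := fun h => h1 (by rw [← hva, h])
  have h2' : v ≠ p - 2 := fun h => h2 (by rw [← hva, h])
  have h3' : v ≠ p - 1 := fun h => h3 (by rw [← hva, h])
  unfold heightLine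
  by_cases hcase : v + 1 ≤ (p - 1) / 2
  · have hmem : 1 + v ∈ {n | ∃ k : ℕ, 1 ≤ k ∧ k ≤ p - 1 ∧ n = k + ((k : ZMod p) * a).val} :=
      ⟨1, le_refl 1, by omega, by rw [Nat.cast_one, one_mul]⟩
    exact le_trans (Nat.sInf_le hmem) (by omega)
  · have hvrange : (p - 1) / 2 + 1 ≤ v ∧ v ≤ p - 3 := by omega
    set d := p - v with hd
    have hd3 : 3 ≤ d := by omega
    have hdm : 2 * d ≤ p - 1 := by omega
    have hkey := key_aux p d hp ⟨t, ht⟩ hd3 hdm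
    have hqr : d * (p / d) + p % d = p := Nat.div_add_mod p d
    have hrd : p % d < d := Nat.mod_lt _ (by omega)
    set k := p / d with hk
    set r := p % d with hr
    have hk1 : 1 ≤ k := (Nat.le_div_iff_mul_le (by omega)).mpr (by omega)
    have hkp : k ≤ p - 1 := by omega
    have hval : ((k : ZMod p) * a).val = r := by
      have hcm : d * k = k * d := Nat.mul_comm d k
      have hmu : k * v + k * d = k * p := by rw [← Nat.mul_add]; congr 1; omega
      have hmul : k * v + p = k * p + r := by omega
      have hcast : ((k : ZMod p) * a) = ((r : ℕ) : ZMod p) := by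
        rw [← hva, ← Nat.cast_mul]
        have hc := congrArg (Nat.cast : ℕ → ZMod p) hmul
        push_cast at hc
        simpa [ZMod.natCast_self] using hc
      rw [hcast, ZMod.val_cast_of_lt (by omega)]
    have hmem : k + r ∈ {n | ∃ k : ℕ, 1 ≤ k ∧ k ≤ p - 1 ∧ n = k + ((k : ZMod p) * a).val} :=
      ⟨k, hk1, hkp, by rw [hval]⟩
    exact le_trans (Nat.sInf_le hmem) hkey
end

section
/- Let p be an odd prime and a ∈ F_p*. Then h_p(1,a) = (p+1)/2 if and only if a ≡ (p-1)/2 (mod p) or a ≡ p-2 (mod p). -/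
private lemma mod_decomp (p q r x : ℕ) (h : x = q * p + r) (hr : r < p) : x % p = r := by
  subst h; rw [Nat.add_comm, Nat.add_mul_mod_self_right]; exact Nat.mod_eq_of_lt hr

set_option maxHeartbeats 1000000 in
theorem stmt_12 (p : ℕ) (hp : p.Prime) (hodd : Odd p) (a : ZMod p) (ha : a ≠ 0) :
    heightLine p a = (p + 1) / 2 ↔
      a = (((p - 1) / 2 : ℕ) : ZMod p) ∨ a = ((p - 2 : ℕ) : ZMod p) := by
  have hp2 := hp.two_le
  obtain ⟨m, hm⟩ : ∃ m, p = 2 * m + 1 := by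
    rcases hodd with ⟨t, ht⟩; exact ⟨t, by omega⟩
  have hm1 : 1 ≤ m := by
    rcases Nat.eq_zero_or_pos m with h0 | h
    · exfalso; omega
    · exact h
  haveI : NeZero p := ⟨by omega⟩
  have hval : ∀ (b : ZMod p) (k : ℕ), ((k : ZMod p) * b).val = (k * b.val) % p := by
    intro b k
    rw [ZMod.val_mul, ZMod.val_natCast, Nat.mod_mul_mod]
  have hvlt : a.val < p := ZMod.val_lt a
  constructor
  · intro h
    have hlow : ∀ k, 1 ≤ k → k ≤ p - 1 → m + 1 ≤ k + (k * a.val) % p := by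
      intro k h1 h2
      have hle : heightLine p a ≤ k + (k * a.val) % p :=
        Nat.sInf_le ⟨k, h1, h2, by rw [hval]⟩
      omega
    have hv1 : 1 ≤ a.val := by
      rcases Nat.eq_zero_or_pos a.val with h0 | hh
      · exact absurd ((ZMod.val_eq_zero a).mp h0) ha
      · exact hh
    have h1v : m ≤ a.val := by
      have := hlow 1 le_rfl (by omega)
      have hmod : (1 * a.val) % p = a.val := by
        rw [one_mul]; exact Nat.mod_eq_of_lt hvlt
      omega
    rcases eq_or_lt_of_le h1v with heq | hlt
    · left
      have hrw : (p - 1) / 2 = a.val := by omega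
      rw [hrw]
      exact (ZMod.natCast_rightInverse a).symm
    · -- a.val ≥ m + 1, write a.val = p - w with 1 ≤ w ≤ m
      obtain ⟨w, hw1, hwm, hveq⟩ : ∃ w, 1 ≤ w ∧ w ≤ m ∧ a.val = p - w :=
        ⟨p - a.val, by omega, by omega, by omega⟩
      by_cases hw1' : w = 1
      · -- a = -1 : every value equals p, contradiction with attained min
        exfalso
        have hne : {n | ∃ k : ℕ, 1 ≤ k ∧ k ≤ p - 1 ∧ n = k + ((k : ZMod p) * a).val}.Nonempty :=
          ⟨1 + (((1 : ℕ) : ZMod p) * a).val, 1, le_rfl, by omega, rfl⟩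
        have hmem := Nat.sInf_mem hne
        have hmem' : (p + 1) / 2 ∈
            {n | ∃ k : ℕ, 1 ≤ k ∧ k ≤ p - 1 ∧ n = k + ((k : ZMod p) * a).val} := by
          rw [show sInf {n | ∃ k : ℕ, 1 ≤ k ∧ k ≤ p - 1 ∧ n = k + ((k : ZMod p) * a).val}
              = heightLine p a from rfl, h] at hmem
          exact hmem
        obtain ⟨k, hk1, hk2, hkeq⟩ := hmem'
        rw [hval] at hkeq
        have h4 : k * a.val + k * 1 = k * p := by
          rw [← Nat.mul_add]; congr 1; omega
        have h5 : (k - 1) * p + 1 * p = k * p := by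
          rw [← Nat.add_mul]; congr 1; omega
        have hdec : (k * a.val) % p = p - k :=
          mod_decomp p (k - 1) (p - k) _ (by omega) (by omega)
        omega
      · by_cases hw2 : w = 2
        · right
          have hrw : p - 2 = a.val := by omega
          rw [hrw]
          exact (ZMod.natCast_rightInverse a).symm
        · -- 3 ≤ w ≤ m : contradiction
          exfalso
          have hw3 : 3 ≤ w := by omega
          have hq1 : 1 ≤ p / w := (Nat.one_le_div_iff (by omega)).2 (by omega)
          have hqw_le : p / w * w ≤ p := Nat.div_mul_le_self p w
          have hqw_ne : p / w * w ≠ p := by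
            intro hcontra
            have hdvd : w ∣ p := by
              refine ⟨p / w, ?_⟩
              rw [Nat.mul_comm]
              exact hcontra.symm
            rcases (Nat.Prime.eq_one_or_self_of_dvd hp w hdvd) with h' | h' <;> omega
          have hmodw : p % w < w := Nat.mod_lt _ (by omega)
          have hdm := Nat.div_add_mod p w
          have hcomm : p / w * w = w * (p / w) := Nat.mul_comm _ _
          have hq3 : p / w * 3 ≤ p / w * w := Nat.mul_le_mul_left _ hw3
          have hq3' : p / w * 3 = 3 * (p / w) := by ring
          have hqle : p / w ≤ p - 1 := by omega
          have h4 : p / w * a.val + p / w * w = p / w * p := by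
            rw [hveq, ← Nat.mul_add]; congr 1; omega
          have h5 : (p / w - 1) * p + 1 * p = p / w * p := by
            rw [← Nat.add_mul]; congr 1; omega
          have hdec : (p / w * a.val) % p = p - p / w * w :=
            mod_decomp p (p / w - 1) (p - p / w * w) _ (by omega) (by omega)
          have hcon := hlow (p / w) hq1 hqle
          rw [hdec] at hcon
          -- now: m + 1 ≤ p/w + (p - p/w * w),  p/w * w ≥ p - w + 1, 3 ≤ w ≤ m
          have hA : p / w * w ≤ p / w + m := by omega
          have hB : 2 * m + 2 ≤ p / w * w + w := by omega
          -- pass to integers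
          have hAz : ((p / w : ℕ) : ℤ) * w ≤ (p / w : ℕ) + m := by exact_mod_cast hA
          have hBz : 2 * (m : ℤ) + 2 ≤ ((p / w : ℕ) : ℤ) * w + w := by exact_mod_cast hB
          have hw3z : (3 : ℤ) ≤ (w : ℕ) := by exact_mod_cast hw3
          have hwmz : ((w : ℕ) : ℤ) ≤ m := by exact_mod_cast hwm
          have hqz : (1 : ℤ) ≤ ((p / w : ℕ) : ℤ) := by exact_mod_cast hq1
          have hqlb : (m : ℤ) + 2 - (w : ℕ) ≤ ((p / w : ℕ) : ℤ) := by linarith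
          have h1' : (0 : ℤ) ≤ (((p / w : ℕ) : ℤ) - ((m : ℤ) + 2 - (w : ℕ))) * (((w : ℕ) : ℤ) - 1) :=
            mul_nonneg (by linarith) (by linarith)
          have h2' : (0 : ℤ) < (((w : ℕ) : ℤ) - 2) * ((m : ℤ) + 1 - (w : ℕ)) :=
            mul_pos (by linarith) (by linarith)
          have h2'' : (0 : ℤ) + 1 ≤ (((w : ℕ) : ℤ) - 2) * ((m : ℤ) + 1 - (w : ℕ)) :=
            Int.lt_iff_add_one_le.mp h2'
          nlinarith [h1', h2'', hAz]
  · intro h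
    have key : ∀ b : ZMod p,
        (∀ k, 1 ≤ k → k ≤ p - 1 → m + 1 ≤ k + (k * b.val) % p) →
        (∃ k, 1 ≤ k ∧ k ≤ p - 1 ∧ k + (k * b.val) % p = m + 1) →
        heightLine p b = (p + 1) / 2 := by
      rintro b hlb ⟨k₀, hk₀1, hk₀2, hk₀⟩
      have hub : heightLine p b ≤ m + 1 :=
        Nat.sInf_le ⟨k₀, hk₀1, hk₀2, by rw [hval]; omega⟩
      have hne : {n | ∃ k : ℕ, 1 ≤ k ∧ k ≤ p - 1 ∧ n = k + ((k : ZMod p) * b).val}.Nonempty :=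
        ⟨k₀ + ((k₀ : ZMod p) * b).val, k₀, hk₀1, hk₀2, rfl⟩
      have hlb' : m + 1 ≤ heightLine p b := by
        unfold heightLine
        apply le_csInf hne
        rintro n ⟨k, h1, h2, rfl⟩
        rw [hval]
        exact hlb k h1 h2
      omega
    rcases h with rfl | rfl
    · -- a = (p-1)/2, value m
      have hval' : ((((p - 1) / 2 : ℕ) : ZMod p)).val = m := by
        rw [ZMod.val_natCast]
        have : (p - 1) / 2 = m := by omega
        rw [this]
        exact Nat.mod_eq_of_lt (by omega)
      apply key
      · intro k hk1 hk2
        rw [hval']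
        rcases Nat.even_or_odd k with ⟨j, hj⟩ | ⟨j, hj⟩
        · -- k = j + j
          have hj1 : 1 ≤ j := by omega
          have hjm : j ≤ m := by omega
          have h4 : k * m = 2 * (j * m) := by rw [hj]; ring
          have h5 : (j - 1) * p + 1 * p = j * p := by
            rw [← Nat.add_mul]; congr 1; omega
          have h6 : j * p = 2 * (j * m) + j := by rw [hm]; ring
          have hdec : (k * m) % p = p - j :=
            mod_decomp p (j - 1) (p - j) _ (by omega) (by omega)
          rw [hdec]; omega
        · -- k = 2j + 1
          have hjm : j ≤ m := by omega
          have h4 : k * m = 2 * (j * m) + m := by rw [hj]; ring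
          have h6 : j * p = 2 * (j * m) + j := by rw [hm]; ring
          have hdec : (k * m) % p = m - j :=
            mod_decomp p j (m - j) _ (by omega) (by omega)
          rw [hdec]; omega
      · refine ⟨1, le_rfl, by omega, ?_⟩
        rw [hval']
        have : (1 * m) % p = m := by
          rw [one_mul]; exact Nat.mod_eq_of_lt (by omega)
        omega
    · -- a = p - 2
      have hval'' : (((p - 2 : ℕ) : ZMod p)).val = p - 2 := by
        rw [ZMod.val_natCast]
        exact Nat.mod_eq_of_lt (by omega)
      apply key
      · intro k hk1 hk2
        rw [hval'']
        have h4 : k * (p - 2) + k * 2 = k * p := by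
          rw [← Nat.mul_add]; congr 1; omega
        by_cases hkm : k ≤ m
        · have h5 : (k - 1) * p + 1 * p = k * p := by
            rw [← Nat.add_mul]; congr 1; omega
          have hdec : (k * (p - 2)) % p = p - 2 * k :=
            mod_decomp p (k - 1) (p - 2 * k) _ (by omega) (by omega)
          rw [hdec]; omega
        · have hk2' : 2 ≤ k := by omega
          have h5 : (k - 2) * p + 2 * p = k * p := by
            rw [← Nat.add_mul]; congr 1; omega
          have hdec : (k * (p - 2)) % p = 2 * p - 2 * k :=
            mod_decomp p (k - 2) (2 * p - 2 * k) _ (by omega) (by omega)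
          rw [hdec]; omega
      · refine ⟨m, hm1, by omega, ?_⟩
        rw [hval'']
        have h4 : m * (p - 2) + m * 2 = m * p := by
          rw [← Nat.mul_add]; congr 1; omega
        have h5 : (m - 1) * p + 1 * p = m * p := by
          rw [← Nat.add_mul]; congr 1; omega
        have hdec : (m * (p - 2)) % p = 1 :=
          mod_decomp p (m - 1) 1 _ (by omega) (by omega)
        rw [hdec]
end

section
/- Let p be prime and A = {a_1,...,a_d} ⊆ F_p*. Let G = (F_p, E_A) be the Cayley digraph with edges (x, x+a) for x ∈ F_p, a ∈ A. Then β(G), the minimum number of edges whose deletion makes G acyclic, satisfies β(G) ≤ h_p(a_1,...,a_d) = min_{k=1}^{p-1} Σ_{j=1}^d (k·a_j mod p). -/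
/-- A directed graph (given by its edge relation `E`) has a directed cycle. -/
def HasDirCycle {V : Type*} (E : V → V → Prop) : Prop :=
  ∃ (n : ℕ) (u : ℕ → V), 1 ≤ n ∧ (∀ j < n, E (u j) (u (j + 1))) ∧ u n = u 0

/-- The edge set of the Cayley digraph of `A ⊆ ZMod p`: all pairs `(x, x + a)`
with `a ∈ A`. -/
def cayleyEdges (p : ℕ) [Fact p.Prime] (A : Finset (ZMod p)) :
    Finset (ZMod p × ZMod p) :=
  (Finset.univ ×ˢ A).image fun q => (q.1, q.1 + q.2)

/-- `β(G)`: minimum number of edges whose deletion makes the digraph acyclic. -/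
noncomputable def betaCayley (p : ℕ) [Fact p.Prime] (A : Finset (ZMod p)) : ℕ :=
  sInf {n | ∃ X ⊆ cayleyEdges p A, X.card = n ∧
    ¬ HasDirCycle (fun x y => (x, y) ∈ cayleyEdges p A \ X)}

/-!
For nonzero `c : ZMod p`, the potential `x ↦ (c * x).val` strictly increases along every
edge `(x, x + a)` except the "wrap-around" edges, where `(c * x).val + (c * a).val ≥ p`.
Deleting those edges leaves an acyclic digraph, and for each `a ∈ A` there are at most
`(c * a).val` of them.
-/

open Finset

theorem not_hasDirCycle_of_lt {V β : Type*} [Preorder β] {E : V → V → Prop} (f : V → β)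
    (hf : ∀ x y, E x y → f x < f y) : ¬ HasDirCycle E := by
  rintro ⟨n, u, hn, hE, hcycle⟩
  have hgrowth : ∀ m, 1 ≤ m → m ≤ n → f (u 0) < f (u m) := by
    intro m hm
    induction m, hm using Nat.le_induction with
    | base => exact fun h => hf _ _ (hE 0 h)
    | succ m hm ih => exact fun h => (ih (by omega)).trans (hf _ _ (hE m (by omega)))
  have hlt := hgrowth n hn le_rfl
  rw [hcycle] at hlt
  exact lt_irrefl _ hlt

theorem ZMod.card_filter_val_add_le_le_val {n : ℕ} [NeZero n] {b : ZMod n} (hb : b ≠ 0) :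
    #{x : ZMod n | (x + b).val ≤ x.val} ≤ b.val := by
  calc #{x : ZMod n | (x + b).val ≤ x.val} ≤ #(Ico (n - b.val) n) := by
        refine card_le_card_of_injOn ZMod.val (fun x hx => ?_) (ZMod.val_injective n).injOn
        simp only [coe_filter, mem_univ, true_and, Set.mem_ofPred_eq] at hx
        simp only [coe_Ico, Set.mem_Ico]
        refine ⟨?_, x.val_lt⟩
        by_contra! hsmall
        rw [ZMod.val_add_of_lt (by omega)] at hx
        exact hb ((ZMod.val_eq_zero b).mp (by omega))
    _ = b.val := by
        have := b.val_lt
        rw [Nat.card_Ico]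
        omega

theorem ZMod.card_filter_val_mul_add_le_le_val {p : ℕ} [Fact p.Prime] {c a : ZMod p}
    (hc : c ≠ 0) (ha : a ≠ 0) :
    #{x : ZMod p | (c * (x + a)).val ≤ (c * x).val} ≤ (c * a).val := by
  refine (card_le_card_of_injOn (c * ·) (fun x hx => ?_) (mul_right_injective₀ hc).injOn).trans
    (card_filter_val_add_le_le_val (mul_ne_zero hc ha))
  simpa [mul_add] using hx

theorem betaCayley_le_sum_val_mul {p : ℕ} [Fact p.Prime] {A : Finset (ZMod p)}
    (h0 : ∀ a ∈ A, a ≠ 0) {c : ZMod p} (hc : c ≠ 0) :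
    betaCayley p A ≤ ∑ a ∈ A, (c * a).val := by
  set X := (cayleyEdges p A).filter fun e => (c * e.2).val ≤ (c * e.1).val
  have hacyclic : ¬ HasDirCycle fun x y => (x, y) ∈ cayleyEdges p A \ X :=
    not_hasDirCycle_of_lt (fun x => (c * x).val) fun x y hxy => by
      simp only [X, mem_sdiff, mem_filter, not_and, not_le] at hxy
      exact hxy.2 hxy.1
  have hcard : #X ≤ ∑ a ∈ A, (c * a).val := calc
    #X ≤ #{q ∈ univ ×ˢ A | (c * (q.1 + q.2)).val ≤ (c * q.1).val} := by
        simp only [X, cayleyEdges, filter_image]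
        exact card_image_le
    _ = ∑ a ∈ A, #{x : ZMod p | (c * (x + a)).val ≤ (c * x).val} := by
        rw [card_filter, sum_product_right]
        simp only [card_filter]
    _ ≤ ∑ a ∈ A, (c * a).val :=
        sum_le_sum fun a ha => ZMod.card_filter_val_mul_add_le_le_val hc (h0 a ha)
  exact (Nat.sInf_le ⟨X, filter_subset _ _, rfl, hacyclic⟩ : betaCayley p A ≤ #X).trans hcard

theorem stmt_17_general (p : ℕ) [Fact p.Prime] (A : Finset (ZMod p))
    (h0 : ∀ a ∈ A, a ≠ 0) :
    betaCayley p A ≤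
      sInf {n | ∃ k : ℕ, 1 ≤ k ∧ k ≤ p - 1 ∧
        n = ∑ a ∈ A, ((k : ZMod p) * a).val} := by
  have hp := (Fact.out : p.Prime).two_le
  refine le_csInf ⟨_, 1, le_rfl, by omega, rfl⟩ ?_
  rintro _ ⟨k, hk1, hkp, rfl⟩
  refine betaCayley_le_sum_val_mul h0 ?_
  rw [Ne, ZMod.natCast_eq_zero_iff]
  exact Nat.not_dvd_of_pos_of_lt (by omega) (by omega)

theorem stmt_17 (p : ℕ) [Fact p.Prime] (A : Finset (ZMod p))
    (hA : A.Nonempty) (h0 : ∀ a ∈ A, a ≠ 0) :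
    betaCayley p A ≤
      sInf {n | ∃ k : ℕ, 1 ≤ k ∧ k ≤ p - 1 ∧
        n = ∑ a ∈ A, ((k : ZMod p) * a).val} :=
  stmt_17_general p A h0
end
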